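/- The Mirimanoff set is not paradoxical: the theory consisting of BST together with the UC-instance ∃y∀x(x∈y ↔ wellfounded(x)) is satisfiable (has a model), hence non-trivial. -/

import Mathlib

/-!
A three-part model: the finite von Neumann ordinals, the set `{1}`, and `M = ω ∪ {{1}}`, with the
expected membership. Every finite ordinal is transitive and well-ordered by `∈`, and `{1} ⊆ 2`, so
every element of `M` is well-founded. `M` itself is not: its elements `3` and `{1}` are
`∈`-incomparable, so `M` is contained in no well-ordered set. Hence `M` collects exactly the
well-founded sets. The extra set `{1}` is what keeps `M` out of itself: `ω` alone would be a
transitive well-ordered set.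
-/

open FirstOrder FirstOrder.Language

namespace SetParadox

/-- The language with a single binary relation symbol `∈`. -/
def L : Language := ⟨fun _ => Empty, fun n => match n with | 2 => Unit | _ => Empty⟩

/-- The membership relation symbol. -/
def memRel : L.Relations 2 := Unit.unit

/-- `memF t₁ t₂` is the atomic formula `t₁ ∈ t₂`. -/
def memF {n : ℕ} (t₁ t₂ : L.Term (Empty ⊕ Fin n)) : L.BoundedFormula Empty n :=
  memRel.boundedFormula₂ t₁ t₂

/-- Extensionality: `∀y∀z(∀x(x∈y ↔ x∈z) → y=z)`. -/
def extAx : L.Sentence :=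
  ∀' ∀' ((∀' (memF (&2) (&0) ⇔ memF (&2) (&1))) ⟹ ((&0) =' (&1)))

/-- Basic set theory: the theory whose only axiom is extensionality. -/
def BST : L.Theory := {extAx}

/-- The UC-instance `∃y∀x(x∈y ↔ φ(x))` determined by a formula `φ` with one free
variable `x` (so that `y` does not occur free in `φ`). -/
def UCinst (φ : L.BoundedFormula Empty 1) : L.Sentence :=
  ∃' ∀' (memF (&1) (&0) ⇔ φ.liftAt 1 0)


/-- `transitive(x) := ∀y∀z((y∈z ∧ z∈x) → y∈x)`, with `x` the free variable `&0`. -/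
def transitiveF : L.BoundedFormula Empty 1 :=
  ∀' ∀' ((memF (&1) (&2) ⊓ memF (&2) (&0)) ⟹ memF (&1) (&0))

/-- `wellordered(x)`: the elements of `x` are irreflexive, transitive, linear and
well-founded with respect to `∈`; `x` is the free variable `&0`. -/
def wellorderedF : L.BoundedFormula Empty 1 :=
  (∀' (memF (&1) (&0) ⟹ ∼(memF (&1) (&1)))) ⊓
  (∀' ∀' ∀' ((memF (&1) (&0) ⊓ memF (&2) (&0) ⊓ memF (&3) (&0)) ⟹
      ((memF (&1) (&2) ⊓ memF (&2) (&3)) ⟹ memF (&1) (&3)))) ⊓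
  (∀' ∀' ((memF (&1) (&0) ⊓ memF (&2) (&0)) ⟹
      (∼((&1) =' (&2)) ⟹ (memF (&1) (&2) ⊔ memF (&2) (&1))))) ⊓
  (∀' ((∀' (memF (&2) (&1) ⟹ memF (&2) (&0))) ⟹
      ((∃' (memF (&2) (&1))) ⟹
        (∃' (memF (&2) (&1) ⊓ ∀' (memF (&3) (&1) ⟹ ∼(memF (&3) (&2))))))))

/-- `wellfounded(x) := ∃y(transitive(y) ∧ wellordered(y) ∧ x ⊆ y)`,
with `x` the free variable `&0`. -/
def wellfoundedF : L.BoundedFormula Empty 1 :=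
  ∃' (transitiveF.liftAt 1 0 ⊓ wellorderedF.liftAt 1 0 ⊓
      (∀' (memF (&2) (&0) ⟹ memF (&2) (&1))))

section Semantics

variable {M : Type*} [L.Structure M]

def Mem (a b : M) : Prop := Structure.RelMap memRel ![a, b]

infix:50 " ∈ₘ " => Mem

@[simp]
theorem realize_memF {n : ℕ} (t₁ t₂ : L.Term (Empty ⊕ Fin n)) (v : Empty → M)
    (xs : Fin n → M) :
    (memF t₁ t₂).Realize v xs ↔ t₁.realize (Sum.elim v xs) ∈ₘ t₂.realize (Sum.elim v xs) := by
  simp only [memF, BoundedFormula.realize_rel₂, Mem]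

theorem realize_liftAt_one_zero {α : Type*} {φ : L.BoundedFormula α 1} {v : α → M}
    {xs : Fin 2 → M} : (φ.liftAt 1 0).Realize v xs ↔ φ.Realize v ![xs 1] := by
  refine (BoundedFormula.realize_liftAt_one (n := 1) (m := 0) zero_le_one).trans (iff_of_eq ?_)
  exact congrArg _ (funext fun i => by fin_cases i; rfl)

def IsTransitive (x : M) : Prop := ∀ y z, y ∈ₘ z → z ∈ₘ x → y ∈ₘ x

def IsWellordered (x : M) : Prop :=
  (∀ a, a ∈ₘ x → ¬ a ∈ₘ a) ∧
  (∀ a b c, a ∈ₘ x → b ∈ₘ x → c ∈ₘ x → a ∈ₘ b → b ∈ₘ c → a ∈ₘ c) ∧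
  (∀ a b, a ∈ₘ x → b ∈ₘ x → a ≠ b → a ∈ₘ b ∨ b ∈ₘ a) ∧
  (∀ s, (∀ u, u ∈ₘ s → u ∈ₘ x) → (∃ u, u ∈ₘ s) → ∃ m, m ∈ₘ s ∧ ∀ z, z ∈ₘ s → ¬ z ∈ₘ m)

def IsWellfounded (x : M) : Prop :=
  ∃ y, IsTransitive y ∧ IsWellordered y ∧ ∀ u, u ∈ₘ x → u ∈ₘ y

theorem IsWellfounded.mem_or_mem {x a b : M} (hx : IsWellfounded x) (ha : a ∈ₘ x) (hb : b ∈ₘ x)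
    (hab : a ≠ b) : a ∈ₘ b ∨ b ∈ₘ a :=
  let ⟨_, _, ⟨_, _, htri, _⟩, hsub⟩ := hx
  htri a b (hsub a ha) (hsub b hb) hab

theorem realize_transitiveF (v : Empty → M) (xs : Fin 1 → M) :
    transitiveF.Realize v xs ↔ IsTransitive (xs 0) := by
  simp [transitiveF, IsTransitive, Fin.snoc]

theorem realize_wellorderedF (v : Empty → M) (xs : Fin 1 → M) :
    wellorderedF.Realize v xs ↔ IsWellordered (xs 0) := by
  simp [wellorderedF, IsWellordered, Fin.snoc, and_assoc]

theorem realize_wellfoundedF (v : Empty → M) (xs : Fin 1 → M) :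
    wellfoundedF.Realize v xs ↔ IsWellfounded (xs 0) := by
  simp [wellfoundedF, IsWellfounded, realize_liftAt_one_zero, realize_transitiveF,
    realize_wellorderedF, Fin.snoc, and_assoc]

theorem realize_extAx : M ⊨ extAx ↔ ∀ y z : M, (∀ x, x ∈ₘ y ↔ x ∈ₘ z) → y = z := by
  simp [extAx, Sentence.Realize, Formula.Realize, Fin.snoc]

theorem realize_UCinst (φ : L.BoundedFormula Empty 1) :
    M ⊨ UCinst φ ↔ ∃ y : M, ∀ x, x ∈ₘ y ↔ φ.Realize default ![x] := by
  simp [UCinst, Sentence.Realize, Formula.Realize, realize_liftAt_one_zero, Fin.snoc]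

end Semantics

/-- The finite von Neumann ordinals, the set `{1}`, and the Mirimanoff set `ω ∪ {{1}}`. -/
inductive MirimanoffModel where
  | ord : ℕ → MirimanoffModel
  | singletonOne : MirimanoffModel
  | mirimanoff : MirimanoffModel

namespace MirimanoffModel

instance : Nonempty MirimanoffModel := ⟨mirimanoff⟩

def mem : MirimanoffModel → MirimanoffModel → Prop
  | ord m, ord n => m < n
  | ord m, singletonOne => m = 1
  | ord _, mirimanoff => True
  | singletonOne, mirimanoff => True
  | _, _ => False

@[simp] theorem ord_mem_ord {m n : ℕ} : mem (ord m) (ord n) ↔ m < n := Iff.rfl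
@[simp] theorem ord_mem_singletonOne {m : ℕ} : mem (ord m) singletonOne ↔ m = 1 := Iff.rfl
@[simp] theorem ord_mem_mirimanoff {m : ℕ} : mem (ord m) mirimanoff := trivial
@[simp] theorem singletonOne_mem_mirimanoff : mem singletonOne mirimanoff := trivial
@[simp] theorem not_singletonOne_mem_ord {n : ℕ} : ¬ mem singletonOne (ord n) := id
@[simp] theorem not_singletonOne_mem_singletonOne : ¬ mem singletonOne singletonOne := id
@[simp] theorem not_mirimanoff_mem {x : MirimanoffModel} : ¬ mem mirimanoff x := by
  cases x <;> exact id

theorem mem_ord_iff {u : MirimanoffModel} {n : ℕ} : mem u (ord n) ↔ ∃ m < n, u = ord m := by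
  cases u <;> simp

theorem mem_mirimanoff_iff {u : MirimanoffModel} : mem u mirimanoff ↔ u ≠ mirimanoff := by
  cases u <;> simp

theorem mem_singletonOne_iff {u : MirimanoffModel} : mem u singletonOne ↔ u = ord 1 := by
  cases u <;> simp

theorem mem_ext {y z : MirimanoffModel} (h : ∀ x, mem x y ↔ mem x z) : y = z := by
  rcases y with m | _ | _ <;> rcases z with n | _ | _
  · have hm := h (ord m)
    have hn := h (ord n)
    simp only [ord_mem_ord, lt_irrefl, false_iff, iff_false, not_lt] at hm hn
    exact congrArg ord (le_antisymm hn hm)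
  -- `ord 0`, `ord 1` and `{1}` tell apart any two elements that are not both ordinals
  all_goals
    have h0 := h (ord 0)
    have h1 := h (ord 1)
    have hs := h singletonOne
    simp at h0 h1 hs ⊢ <;> omega

instance : L.Structure MirimanoffModel where
  funMap f := Empty.elim f
  RelMap {n} r v := match n, r with
    | 2, _ => mem (v 0) (v 1)

@[simp] theorem mem_iff {a b : MirimanoffModel} : a ∈ₘ b ↔ mem a b := Iff.rfl

theorem isTransitive_ord (n : ℕ) : IsTransitive (ord n) := by
  intro y z hyz hzn
  obtain ⟨m, hm, rfl⟩ := mem_ord_iff.1 hzn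
  obtain ⟨k, hk, rfl⟩ := mem_ord_iff.1 hyz
  exact ord_mem_ord.2 (hk.trans hm)

theorem isWellordered_ord (n : ℕ) : IsWellordered (ord n) := by
  refine ⟨?irrefl, ?trans, ?total, ?wf⟩
  case irrefl =>
    intro a ha
    obtain ⟨m, -, rfl⟩ := mem_ord_iff.1 ha
    exact lt_irrefl m
  case trans =>
    intro a b c ha hb hc hab hbc
    obtain ⟨i, -, rfl⟩ := mem_ord_iff.1 ha
    obtain ⟨j, -, rfl⟩ := mem_ord_iff.1 hb
    obtain ⟨k, -, rfl⟩ := mem_ord_iff.1 hc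
    exact ord_mem_ord.2 ((ord_mem_ord.1 hab).trans hbc)
  case total =>
    intro a b ha hb hab
    obtain ⟨i, -, rfl⟩ := mem_ord_iff.1 ha
    obtain ⟨j, -, rfl⟩ := mem_ord_iff.1 hb
    exact lt_or_gt_of_ne fun hij => hab (congrArg ord hij)
  case wf =>
    classical
    rintro s hs ⟨u, hu⟩
    obtain ⟨k, -, rfl⟩ := mem_ord_iff.1 (hs u hu)
    have hex : ∃ k, mem (ord k) s := ⟨k, hu⟩
    refine ⟨ord (Nat.find hex), Nat.find_spec hex, fun z hz hzm => ?_⟩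
    obtain ⟨j, -, rfl⟩ := mem_ord_iff.1 (hs z hz)
    exact Nat.find_min hex (ord_mem_ord.1 hzm) hz

theorem isWellfounded_iff_mem_mirimanoff {x : MirimanoffModel} :
    IsWellfounded x ↔ mem x mirimanoff := by
  rw [mem_mirimanoff_iff]
  constructor
  · rintro hx rfl
    have hcmp := hx.mem_or_mem (a := ord 3) (b := singletonOne) (ord_mem_mirimanoff (m := 3))
      singletonOne_mem_mirimanoff (by simp)
    simp at hcmp
  · intro hx
    cases x with
    | ord n => exact ⟨ord n, isTransitive_ord n, isWellordered_ord n, fun _ => id⟩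
    | singletonOne =>
      refine ⟨ord 2, isTransitive_ord 2, isWellordered_ord 2, fun u hu => ?_⟩
      rw [mem_iff, mem_singletonOne_iff] at hu
      simp [hu]
    | mirimanoff => exact absurd rfl hx

end MirimanoffModel

open MirimanoffModel in
/-- The Mirimanoff set is not paradoxical: `BST` plus the UC-instance
`∃y∀x(x∈y ↔ wellfounded(x))` is satisfiable, hence non-trivial. -/
theorem mirimanoff_set_not_paradoxical :
    (BST ∪ {UCinst wellfoundedF}).IsSatisfiable := by
  have hext : MirimanoffModel ⊨ extAx := realize_extAx.2 fun _ _ => mem_ext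
  have huc : MirimanoffModel ⊨ UCinst wellfoundedF :=
    (realize_UCinst wellfoundedF).2
      ⟨mirimanoff, fun x =>
        ((realize_wellfoundedF default ![x]).trans isWellfounded_iff_mem_mirimanoff).symm⟩
  have : MirimanoffModel ⊨ BST ∪ {UCinst wellfoundedF} :=
    Theory.model_union_iff.2 ⟨Theory.model_singleton_iff.2 hext, Theory.model_singleton_iff.2 huc⟩
  exact Theory.Model.isSatisfiable MirimanoffModel

end SetParadox
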